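/- Let $(p_j)$ be positive, non-increasing, summable frequencies with $\limsup_{j\to\infty} p_{j+1}/p_j \le 1/2$. Then the poissonized variance $V(t) = \sum_j (e^{-tp_j} - e^{-2tp_j})$ satisfies $\limsup_{t\to\infty} V(t) \le 1$. -/

import Mathlib

/-!
If `y ≤ (1/2 + ε) x`, then `e^{-x} - e^{-2x} ≤ (e^{-2y} - e^{-2x}) + 8ε (e^{-y} - e^{-x})`.
Once the ratios `p (j+1) / p j` stay below `1/2 + ε`, taking `x = t p_j` and `y = t p_{j+1}`
makes the partial sums of the tail of `V t` telescope to at most `1 + 8ε` (so the series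
converges), while the finitely many earlier terms tend to `0` as `t → ∞`.
-/

open Real Filter Topology Finset

noncomputable def poissonTerm (x : ℝ) : ℝ := exp (-x) - exp (-(2 * x))

lemma poissonTerm_nonneg {x : ℝ} (hx : 0 ≤ x) : 0 ≤ poissonTerm x :=
  sub_nonneg.mpr (exp_le_exp.mpr (by linarith))

lemma tendsto_poissonTerm_atTop : Tendsto poissonTerm atTop (𝓝 0) := by
  have h2 : Tendsto (fun x : ℝ => exp (-(2 * x))) atTop (𝓝 0) :=
    tendsto_exp_neg_atTop_nhds_zero.comp (tendsto_id.const_mul_atTop two_pos)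
  rw [← sub_zero (0 : ℝ)]
  exact tendsto_exp_neg_atTop_nhds_zero.sub h2

lemma poissonTerm_le_telescoping {x y ε : ℝ} (hx : 0 ≤ x) (hε : 0 < ε) (hε4 : ε ≤ 1 / 4)
    (hxy : y ≤ (1 / 2 + ε) * x) :
    poissonTerm x ≤ (exp (-(2 * y)) - exp (-(2 * x))) + 8 * ε * (exp (-y) - exp (-x)) := by
  have hgap : exp (-x) - exp (-(2 * y)) ≤ 2 * ε * x * exp (-x) := by
    have hy : exp (-((1 + 2 * ε) * x)) ≤ exp (-(2 * y)) := exp_le_exp.mpr (by nlinarith)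
    have hlin : exp (-x) - exp (-((1 + 2 * ε) * x)) ≤ 2 * ε * x * exp (-x) := by
      rw [show -((1 + 2 * ε) * x) = -x + -(2 * ε * x) by ring, exp_add]
      nlinarith [add_one_le_exp (-(2 * ε * x)), exp_pos (-x)]
    linarith
  have hdecay : x * exp (-x) ≤ 4 * (exp (-y) - exp (-x)) := by
    have hy : exp (-(3 / 4 * x)) ≤ exp (-y) := exp_le_exp.mpr (by nlinarith)
    have hlin : x / 4 * exp (-x) ≤ exp (-(3 / 4 * x)) - exp (-x) := by
      rw [show -(3 / 4 * x) = -x + x / 4 by ring, exp_add]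
      nlinarith [add_one_le_exp (x / 4), exp_pos (-x)]
    linarith
  unfold poissonTerm
  nlinarith

lemma sum_range_poissonTerm_le {x : ℕ → ℝ} {ε : ℝ} (hx : ∀ i, 0 ≤ x i) (hε : 0 < ε)
    (hε4 : ε ≤ 1 / 4) (hratio : ∀ i, x (i + 1) ≤ (1 / 2 + ε) * x i) (M : ℕ) :
    ∑ i ∈ range M, poissonTerm (x i) ≤ 1 + 8 * ε := by
  have hG : exp (-(2 * x M)) - exp (-(2 * x 0)) ≤ 1 := by
    linarith [exp_le_one_iff.mpr (by linarith [hx M] : -(2 * x M) ≤ 0), exp_pos (-(2 * x 0))]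
  have hH : exp (-x M) - exp (-x 0) ≤ 1 := by
    linarith [exp_le_one_iff.mpr (by linarith [hx M] : -x M ≤ 0), exp_pos (-x 0)]
  calc ∑ i ∈ range M, poissonTerm (x i)
      ≤ ∑ i ∈ range M, ((exp (-(2 * x (i + 1))) - exp (-(2 * x i)))
          + 8 * ε * (exp (-x (i + 1)) - exp (-x i))) :=
        sum_le_sum fun i _ => poissonTerm_le_telescoping (hx i) hε hε4 (hratio i)
    _ = (exp (-(2 * x M)) - exp (-(2 * x 0))) + 8 * ε * (exp (-x M) - exp (-x 0)) := by
        rw [sum_add_distrib, sum_range_sub (fun i => exp (-(2 * x i))), ← mul_sum,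
          sum_range_sub (fun i => exp (-x i))]
    _ ≤ 1 + 8 * ε := by nlinarith

lemma eventually_tsum_poissonTerm_le {p : ℕ → ℝ} (hpos : ∀ j, 0 < p j) {ε : ℝ} (hε : 0 < ε)
    (hε4 : ε ≤ 1 / 4) {N : ℕ} (hN : ∀ j ≥ N, p (j + 1) ≤ (1 / 2 + ε) * p j) :
    ∀ᶠ t in atTop, ∑' j, poissonTerm (t * p j) ≤ 1 + 9 * ε := by
  have hhead : Tendsto (fun t => ∑ j ∈ range N, poissonTerm (t * p j)) atTop (𝓝 0) := by
    simpa using tendsto_finsetSum (range N) fun j _ =>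
      tendsto_poissonTerm_atTop.comp (tendsto_id.atTop_mul_const (hpos j))
  filter_upwards [hhead.eventually_lt_const hε, eventually_ge_atTop 0] with t hhead_lt ht
  have hx : ∀ i, 0 ≤ t * p (i + N) := fun i => mul_nonneg ht (hpos _).le
  have hratio : ∀ i, t * p (i + 1 + N) ≤ (1 / 2 + ε) * (t * p (i + N)) := fun i => by
    rw [Nat.add_right_comm, mul_left_comm]
    exact mul_le_mul_of_nonneg_left (hN _ (Nat.le_add_left N i)) ht
  have htail := sum_range_poissonTerm_le hx hε hε4 hratio
  have hnonneg : ∀ i, 0 ≤ poissonTerm (t * p (i + N)) := fun i => poissonTerm_nonneg (hx i)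
  rw [← Summable.sum_add_tsum_nat_add N ((summable_nat_add_iff N).mp
    (summable_of_sum_range_le hnonneg htail))]
  linarith [Real.tsum_le_of_sum_range_le hnonneg htail]

lemma eventually_le_mul_of_limsup_div_lt {p : ℕ → ℝ} (hpos : ∀ j, 0 < p j)
    (hmono : ∀ j, p (j + 1) ≤ p j) {r : ℝ}
    (h : limsup (fun j => p (j + 1) / p j) atTop < r) :
    ∀ᶠ j in atTop, p (j + 1) ≤ r * p j := by
  have hbdd : IsBoundedUnder (· ≤ ·) atTop (fun j => p (j + 1) / p j) :=
    isBoundedUnder_of ⟨1, fun j => div_le_one_of_le₀ (hmono j) (hpos j).le⟩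
  filter_upwards [eventually_lt_of_limsup_lt h hbdd] with j hj
  exact ((div_lt_iff₀ (hpos j)).mp hj).le

lemma EReal.limsup_coe_le_of_forall_gt {α : Type*} {l : Filter α} {f : α → ℝ} {a : ℝ}
    (h : ∀ c > a, ∀ᶠ x in l, f x ≤ c) : limsup (fun x => (f x : EReal)) l ≤ a := by
  rw [limsup_le_iff']
  intro y hy
  obtain ⟨c, hac, hcy⟩ := EReal.exists_between_coe_real hy
  filter_upwards [h c (EReal.coe_lt_coe_iff.mp hac)] with x hx
  exact (EReal.coe_le_coe_iff.mpr hx).trans hcy.le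

theorem stmt12 (p : ℕ → ℝ) (hpos : ∀ j, 0 < p j) (hmono : ∀ j, p (j + 1) ≤ p j)
    (hratio : Filter.limsup (fun j : ℕ => p (j + 1) / p j) atTop ≤ 1 / 2)
    (V : ℝ → ℝ)
    (hV : ∀ t : ℝ, V t = ∑' j : ℕ, (Real.exp (-(t * p j)) - Real.exp (-(2 * t * p j)))) :
    Filter.limsup (fun t : ℝ => ((V t : ℝ) : EReal)) atTop ≤ (1 : EReal) := by
  refine EReal.limsup_coe_le_of_forall_gt fun c hc => ?_
  set ε := min ((c - 1) / 9) (1 / 4)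
  have hε : 0 < ε := lt_min (by linarith) (by norm_num)
  have hεc : 1 + 9 * ε ≤ c := by linarith [min_le_left ((c - 1) / 9) (1 / 4)]
  obtain ⟨N, hN⟩ := eventually_atTop.mp
    (eventually_le_mul_of_limsup_div_lt hpos hmono (hratio.trans_lt (by linarith : (1 / 2 : ℝ) < 1 / 2 + ε)))
  filter_upwards [eventually_tsum_poissonTerm_le hpos hε (min_le_right _ _) hN] with t ht
  have hVt : V t = ∑' j, poissonTerm (t * p j) := by simp only [hV, poissonTerm, mul_assoc]
  linarith
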